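/- arXiv:1009.4826 — 5 statements merged into one kernel-verified Lean document; each statement's English description precedes it below -/
import Mathlib

section
/- Let A be an n×m integer matrix with HNF having pivots h_{1,j_1},...,h_{r,j_r}. For each i ≤ r, the gcd of the i×i minors of the n×i submatrix of A formed by columns j_1,...,j_i equals the product h_{1,j_1}·h_{2,j_2}·...·h_{i,j_i}. -/
/-- `H` is in Hermite normal form with `r` nonzero rows and pivot columns `j`. -/
def IsHNFWith {n m : ℕ} (H : Matrix (Fin n) (Fin m) ℤ) (r : ℕ) (hr : r ≤ n)
    (j : Fin r → Fin m) : Prop :=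
  StrictMono j ∧
  (∀ i : Fin n, r ≤ (i : ℕ) → ∀ l, H i l = 0) ∧
  (∀ i : Fin r, 0 < H (Fin.castLE hr i) (j i)) ∧
  (∀ i : Fin r, ∀ l : Fin m, (l : ℕ) < (j i : ℕ) → H (Fin.castLE hr i) l = 0) ∧
  (∀ i : Fin r, ∀ k : Fin n, (k : ℕ) < (i : ℕ) →
    0 ≤ H k (j i) ∧ H k (j i) < H (Fin.castLE hr i) (j i))

/-- `H` is in Hermite normal form. -/
def IsHNF {n m : ℕ} (H : Matrix (Fin n) (Fin m) ℤ) : Prop :=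
  ∃ (r : ℕ) (hr : r ≤ n) (j : Fin r → Fin m), IsHNFWith H r hr j

/-- A square integer matrix is unimodular if its determinant is `±1`. -/
def IsUnimodular {n : ℕ} (U : Matrix (Fin n) (Fin n) ℤ) : Prop :=
  U.det = 1 ∨ U.det = -1

/-- `H` is the Hermite normal form of `A`: `H` is in HNF and `A = U * H`
for some unimodular `U`. -/
def IsHNFOf {n m : ℕ} (H A : Matrix (Fin n) (Fin m) ℤ) : Prop :=
  IsHNF H ∧ ∃ U : Matrix (Fin n) (Fin n) ℤ, IsUnimodular U ∧ A = U * H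

open scoped Classical in
/-- The gcd of the `i × i` minors of the `n × i` submatrix of `A` formed by the
columns `c`, the minors being indexed by strictly monotone row selections. -/
noncomputable def minorsGcd {n m i : ℕ} (A : Matrix (Fin n) (Fin m) ℤ)
    (c : Fin i → Fin m) : ℤ :=
  Finset.univ.gcd fun ρ : {ρ : Fin i → Fin n // StrictMono ρ} =>
    (A.submatrix ρ.1 c).det


open Matrix Finset

lemma det_rect_mul {i n : ℕ} (V : Matrix (Fin i) (Fin n) ℤ) (W : Matrix (Fin n) (Fin i) ℤ) :
    (V * W).det = ∑ κ : Fin i → Fin n, (∏ q, V q (κ q)) * (W.submatrix κ id).det := by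
  have h1 : (V * W) = Matrix.of (fun q => ∑ k : Fin n, V q k • W k) := by
    ext q l; simp [Matrix.mul_apply]
  rw [h1]
  have h2 : Matrix.det (Matrix.of (fun q => ∑ k : Fin n, V q k • W k))
      = (Matrix.detRowAlternating : (Fin i → ℤ) [⋀^Fin i]→ₗ[ℤ] ℤ).toMultilinearMap
        (fun q => ∑ k : Fin n, V q k • W k) := rfl
  rw [h2, MultilinearMap.map_sum]
  refine Finset.sum_congr rfl fun κ _ => ?_
  rw [MultilinearMap.map_smul_univ]
  rfl

open scoped Classical in
/-- If `W` is an `n × i` integer matrix with a left inverse, then the gcd of its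
`i × i` minors is `1`. -/
lemma gcd_minors_of_leftInverse {i n : ℕ} (W : Matrix (Fin n) (Fin i) ℤ)
    (V : Matrix (Fin i) (Fin n) ℤ) (hVW : V * W = 1) :
    (Finset.univ.gcd fun ρ : {ρ : Fin i → Fin n // StrictMono ρ} =>
      (W.submatrix ρ.1 id).det) = 1 := by
  set g := Finset.univ.gcd fun ρ : {ρ : Fin i → Fin n // StrictMono ρ} =>
      (W.submatrix ρ.1 id).det with hg
  have hdvd : ∀ κ : Fin i → Fin n, g ∣ (W.submatrix κ id).det := by
    intro κ
    by_cases hinj : Function.Injective κ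
    · set t : Finset (Fin n) := Finset.univ.image κ with ht
      have hcard : t.card = i := by
        rw [ht, Finset.card_image_of_injective _ hinj, Finset.card_univ, Fintype.card_fin]
      have hmem : ∀ q, κ q ∈ t := fun q => Finset.mem_image.2 ⟨q, Finset.mem_univ q, rfl⟩
      set mono : Fin i → Fin n := fun p => t.orderEmbOfFin hcard p with hmono
      have hmonoSM : StrictMono mono := (t.orderEmbOfFin hcard).strictMono
      set e : Fin i → Fin i := fun q => (t.orderIsoOfFin hcard).symm ⟨κ q, hmem q⟩ with he
      have hcomp : ∀ q, mono (e q) = κ q := by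
        intro q
        rw [hmono]
        simp only [he]
        rw [← Finset.coe_orderIsoOfFin_apply, OrderIso.apply_symm_apply]
      have einj : Function.Injective e := by
        intro a b hab
        have := congrArg (t.orderIsoOfFin hcard) hab
        simp only [he, OrderIso.apply_symm_apply, Subtype.mk.injEq] at this
        exact hinj this
      set π : Equiv.Perm (Fin i) := Equiv.ofBijective e (Finite.injective_iff_bijective.mp einj)
        with hπ
      have hsub : W.submatrix κ id = (W.submatrix mono id).submatrix π id := by
        ext q l
        simp only [Matrix.submatrix_apply, id_eq]
        rw [show π q = e q from rfl, hcomp]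
      rw [hsub, Matrix.det_permute]
      exact Dvd.dvd.mul_left
        (Finset.gcd_dvd (Finset.mem_univ (⟨mono, hmonoSM⟩ :
          {ρ : Fin i → Fin n // StrictMono ρ}))) _
    · rw [Function.not_injective_iff] at hinj
      obtain ⟨a, b, hab, hne⟩ := hinj
      have : (W.submatrix κ id).det = 0 := by
        apply Matrix.det_zero_of_row_eq hne
        funext l
        simp [hab]
      rw [this]; exact dvd_zero g
  have h1 : g ∣ 1 := by
    have := det_rect_mul V W
    rw [hVW, Matrix.det_one] at this
    rw [this]
    exact Finset.dvd_sum fun κ _ => (hdvd κ).mul_left _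
  have hnn : 0 ≤ g := by
    have := Finset.normalize_gcd (s := (Finset.univ : Finset {ρ : Fin i → Fin n // StrictMono ρ}))
      (f := fun ρ => (W.submatrix ρ.1 id).det)
    exact Int.nonneg_of_normalize_eq_self this
  rcases Int.isUnit_iff.mp (isUnit_of_dvd_one h1) with h | h
  · exact h
  · omega

/-- The gcd of the `i × i` minors of the columns `j_1, …, j_i` of `A` is the
product of the first `i` pivots of the HNF of `A`. -/
theorem minorsGcd_eq_prod_pivots (n m : ℕ) (A H : Matrix (Fin n) (Fin m) ℤ)
    (r : ℕ) (hr : r ≤ n) (j : Fin r → Fin m) (hH : IsHNFWith H r hr j)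
    (U : Matrix (Fin n) (Fin n) ℤ) (hU : IsUnimodular U) (hA : A = U * H)
    (i : ℕ) (hi : i ≤ r) :
    minorsGcd A (fun l : Fin i => j (Fin.castLE hi l)) =
      ∏ l : Fin i, H (Fin.castLE hr (Fin.castLE hi l)) (j (Fin.castLE hi l)) := by
  unfold minorsGcd
  classical
  obtain ⟨hjmono, hzero, hpiv, hleft, -⟩ := hH
  have hin : i ≤ n := hi.trans hr
  set c : Fin i → Fin m := fun l => j (Fin.castLE hi l) with hc
  set σ0 : Fin i → Fin n := Fin.castLE hin with hσ0
  set T : Matrix (Fin i) (Fin i) ℤ :=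
    Matrix.of (fun p l => H (Fin.castLE hr (Fin.castLE hi p)) (c l)) with hT
  -- T is upper triangular with the pivots on the diagonal
  have hTtri : T.BlockTriangular id := by
    intro p l hlt
    apply hleft
    have : Fin.castLE hi l < Fin.castLE hi p := hlt
    exact hjmono this
  have hdetT : T.det = ∏ l : Fin i, H (Fin.castLE hr (Fin.castLE hi l)) (j (Fin.castLE hi l)) :=
    Matrix.det_of_upperTriangular hTtri
  have hTpos : 0 < T.det := by
    rw [hdetT]
    exact Finset.prod_pos fun l _ => hpiv _
  -- vanishing of rows of H below row i in the chosen columns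
  have h0 : ∀ (l : Fin i) (k : Fin n), (i : ℕ) ≤ (k : ℕ) → H k (c l) = 0 := by
    intro l k hk
    rcases lt_or_ge (k : ℕ) r with h | h
    · have hkl : Fin.castLE hi l < (⟨(k : ℕ), h⟩ : Fin r) := by
        show (l : ℕ) < (k : ℕ)
        exact lt_of_lt_of_le l.isLt hk
      have hk' : k = Fin.castLE hr ⟨(k : ℕ), h⟩ := Fin.ext rfl
      rw [hk']
      exact hleft _ _ (hjmono hkl)
    · exact hzero k h _
  -- the key factorization of each minor
  have hfact : ∀ ρ : Fin i → Fin n, A.submatrix ρ c = (U.submatrix ρ σ0) * T := by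
    intro ρ
    ext q l
    rw [Matrix.submatrix_apply, hA, Matrix.mul_apply, Matrix.mul_apply]
    rw [← Finset.sum_subset (Finset.subset_univ
      (Finset.univ.map (Fin.castLEEmb hin)))]
    · rw [Finset.sum_map]
      exact Finset.sum_congr rfl fun p _ => rfl
    · intro k _ hk
      have hik : (i : ℕ) ≤ (k : ℕ) := by
        by_contra hlt
        push_neg at hlt
        exact hk (Finset.mem_map.2 ⟨⟨(k : ℕ), hlt⟩, Finset.mem_univ _, Fin.ext rfl⟩)
      rw [h0 l k hik, mul_zero]
  -- the gcd of the minors of the first i columns of U is 1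
  letI : Invertible U := U.invertibleOfIsUnitDet (Int.isUnit_iff.mpr hU)
  have hVW : ((⅟U).submatrix σ0 id) * (U.submatrix id σ0) = 1 := by
    ext p q
    rw [Matrix.mul_apply]
    have : ∑ k : Fin n, (⅟U).submatrix σ0 id p k * (U.submatrix id σ0) k q
        = (⅟U * U) (σ0 p) (σ0 q) := by
      rw [Matrix.mul_apply]
      rfl
    rw [this, invOf_mul_self]
    by_cases hpq : p = q
    · subst hpq; simp [Matrix.one_apply]
    · rw [Matrix.one_apply_ne, Matrix.one_apply_ne hpq]
      exact fun hcon => hpq ((Fin.castLEEmb hin).injective hcon)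
  have hg1 : (Finset.univ.gcd fun ρ : {ρ : Fin i → Fin n // StrictMono ρ} =>
      (U.submatrix ρ.1 σ0).det) = 1 := by
    have := gcd_minors_of_leftInverse (U.submatrix id σ0) ((⅟U).submatrix σ0 id) hVW
    rw [← this]
    apply Finset.gcd_congr rfl
    intro ρ _
    rw [Matrix.submatrix_submatrix]
    rfl
  -- assemble
  rw [← hdetT]
  have congr1 : ∀ ρ : {ρ : Fin i → Fin n // StrictMono ρ},
      (A.submatrix ρ.1 c).det = (U.submatrix ρ.1 σ0).det * T.det := by
    intro ρ; rw [hfact ρ.1, Matrix.det_mul]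
  rw [Finset.gcd_congr rfl (fun ρ _ => congr1 ρ), Finset.gcd_mul_right,
    Int.normalize_of_nonneg hTpos.le, hg1, one_mul]
end

section
/- The gcd of the i×i minors of the matrix formed by any fixed set of i columns of an integer matrix A is invariant under left multiplication of A by a unimodular matrix. -/
open scoped Classical

lemma minorsGcd_nonneg {n m i : ℕ} (A : Matrix (Fin n) (Fin m) ℤ)
    (c : Fin i → Fin m) : 0 ≤ minorsGcd A c := by
  have : |minorsGcd A c| = minorsGcd A c := by
    rw [Int.abs_eq_normalize, minorsGcd, Finset.normalize_gcd]
  rw [← this]; exact abs_nonneg _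

/-- Any (not necessarily monotone) minor is divisible by the gcd of monotone minors. -/
lemma minorsGcd_dvd_det {n m i : ℕ} (A : Matrix (Fin n) (Fin m) ℤ)
    (c : Fin i → Fin m) (f : Fin i → Fin n) :
    minorsGcd A c ∣ (A.submatrix f c).det := by
  by_cases hf : Function.Injective f
  · set s : Finset (Fin n) := Finset.univ.image f with hs
    have hcard : s.card = i := by
      rw [hs, Finset.card_image_of_injective _ hf, Finset.card_univ, Fintype.card_fin]
    set ρ : Fin i → Fin n := fun x => (s.orderIsoOfFin hcard x : Fin n) with hρ
    have hρmono : StrictMono ρ := fun a b hab => (s.orderIsoOfFin hcard).strictMono hab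
    have hmem : ∀ x, f x ∈ s := fun x => Finset.mem_image_of_mem f (Finset.mem_univ x)
    set e : Fin i → Fin i := fun x => (s.orderIsoOfFin hcard).symm ⟨f x, hmem x⟩ with he
    have hecomp : ∀ x, ρ (e x) = f x := fun x =>
      congrArg Subtype.val ((s.orderIsoOfFin hcard).apply_symm_apply ⟨f x, hmem x⟩)
    have heinj : Function.Injective e := by
      intro a b hab
      apply hf
      rw [← hecomp a, ← hecomp b, hab]
    let σ : Equiv.Perm (Fin i) := Equiv.ofBijective e
      ((Finite.injective_iff_bijective).mp heinj)
    have hfρ : A.submatrix f c = (A.submatrix ρ c).submatrix σ id := by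
      ext x y
      simp only [Matrix.submatrix_apply, id]
      rw [show σ x = e x from rfl, hecomp x]
    rw [hfρ, Matrix.det_permute]
    refine Dvd.dvd.mul_left ?_ _
    exact Finset.gcd_dvd (Finset.mem_univ (⟨ρ, hρmono⟩ : {ρ : Fin i → Fin n // StrictMono ρ}))
  · rw [Function.not_injective_iff] at hf
    obtain ⟨a, b, hab, hne⟩ := hf
    have : (A.submatrix f c).det = 0 := by
      apply Matrix.det_zero_of_row_eq hne
      ext y
      simp [hab]
    simp [this]

lemma minorsGcd_dvd_mul {n m i : ℕ} (A : Matrix (Fin n) (Fin m) ℤ)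
    (c : Fin i → Fin m) (V : Matrix (Fin n) (Fin n) ℤ) :
    minorsGcd A c ∣ minorsGcd (V * A) c := by
  apply Finset.dvd_gcd
  rintro ⟨ρ, hρ⟩ -
  have expand : ((V * A).submatrix ρ c).det
      = ∑ f : Fin i → Fin n, (∏ x, V (ρ x) (f x)) * (A.submatrix f c).det := by
    have h1 : ((V * A).submatrix ρ c)
        = Matrix.of fun x => ∑ k, V (ρ x) k • (fun y => A k (c y)) := by
      ext x y
      simp [Matrix.mul_apply, Finset.sum_apply]
    rw [h1]
    show (Matrix.detRowAlternating (R := ℤ) (n := Fin i)).toMultilinearMap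
        (fun x => ∑ k, V (ρ x) k • (fun y => A k (c y))) = _
    rw [(Matrix.detRowAlternating (R := ℤ) (n := Fin i)).toMultilinearMap.map_sum
      (g := fun x k => (V (ρ x) k • (fun y => A k (c y)) : Fin i → ℤ))]
    refine Finset.sum_congr rfl fun f _ => ?_
    rw [(Matrix.detRowAlternating (R := ℤ) (n := Fin i)).toMultilinearMap.map_smul_univ
      (fun x => V (ρ x) (f x)) (fun x => (fun y => A (f x) (c y)))]
    rfl
  rw [expand]
  exact Finset.dvd_sum fun f _ => Dvd.dvd.mul_left (minorsGcd_dvd_det A c f) _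

/-- The gcd of the `i × i` minors of any fixed set of `i` columns of `A` is
invariant under left multiplication by a unimodular matrix. -/
theorem minorsGcd_unimodular_invariant (n m i : ℕ) (A : Matrix (Fin n) (Fin m) ℤ)
    (c : Fin i → Fin m) (hc : Function.Injective c)
    (U : Matrix (Fin n) (Fin n) ℤ) (hU : IsUnimodular U) :
    minorsGcd (U * A) c = minorsGcd A c := by
  have hUdet : IsUnit U.det := by
    rcases hU with h | h <;> simp [h]
  have hUnit : IsUnit U := (Matrix.isUnit_iff_isUnit_det U).mpr hUdet
  obtain ⟨W, hW⟩ : ∃ W : Matrix (Fin n) (Fin n) ℤ, W * U = 1 :=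
    ⟨hUnit.unit⁻¹, by simpa using hUnit.unit.inv_mul⟩
  have h1 : minorsGcd A c ∣ minorsGcd (U * A) c := minorsGcd_dvd_mul A c U
  have h2 : minorsGcd (U * A) c ∣ minorsGcd A c := by
    have := minorsGcd_dvd_mul (U * A) c W
    rwa [← Matrix.mul_assoc, hW, Matrix.one_mul] at this
  exact Int.dvd_antisymm (minorsGcd_nonneg _ _) (minorsGcd_nonneg _ _) h2 h1
end

section
/- Let n, m, k satisfy k ≤ m if m < n and k < n otherwise, and let d_1,...,d_k ∈ ℕ with d_k = 0. Then the set of n×m integer matrices A whose HNF diagonal begins with (d_1,...,d_k) has natural density 0. -/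
/-!
If `A = U * H` with `H` in Hermite normal form and `H (k-1) (k-1) = 0`, then the rows of `H`
from `k-1` on vanish in the first `k` columns. Hence the top-left `k × k` block of `A` is the
product of the top-left blocks of `U` and `H`, the latter having a zero row, so it is singular.
The set in question therefore lies in the zero locus of a nonzero polynomial in the entries
(a `k × k` minor), and by Schwartz–Zippel such a polynomial vanishes at only `O(B ^ (nm - 1))`
points of a cube of side `2B`.
-/

open Filter

/-- Real value of the Riemann zeta function at a natural number argument. -/
noncomputable def zetaR (k : ℕ) : ℝ := ∑' n : ℕ, (1 : ℝ) / (n + 1 : ℝ) ^ k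

open scoped Classical in
/-- Number of matrices of `S` in the cube of side `2B` centered at `z`. -/
noncomputable def matCubeCount {n m : ℕ} (S : Set (Matrix (Fin n) (Fin m) ℤ))
    (z : Matrix (Fin n) (Fin m) ℤ) (B : ℕ) : ℕ :=
  (Finset.filter (fun A : Fin n → Fin m → ℤ => Matrix.of A ∈ S)
    (Fintype.piFinset fun i =>
      Fintype.piFinset fun l => Finset.Ico (z i l - (B : ℤ)) (z i l + (B : ℤ)))).card

/-- Natural density of a set of `n × m` integer matrices, via counting in cubes
of side `2B` and arbitrary center, normalized by `(2B)^(nm)`. -/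
def HasMatDensity {n m : ℕ} (S : Set (Matrix (Fin n) (Fin m) ℤ)) (δ : ℝ) : Prop :=
  ∀ z : Matrix (Fin n) (Fin m) ℤ,
    Tendsto (fun B : ℕ => (matCubeCount S z B : ℝ) / (2 * (B : ℝ)) ^ (n * m))
      atTop (nhds δ)

theorem Fin.val_le_val_of_strictMono {r m : ℕ} {j : Fin r → Fin m} (hj : StrictMono j)
    (i : Fin r) : (i : ℕ) ≤ j i := by
  obtain ⟨i, hi⟩ := i
  induction i with
  | zero => exact Nat.zero_le _
  | succ a ih => exact (ih (by omega)).trans_lt (hj (Fin.mk_lt_mk.2 a.lt_succ_self))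

theorem Matrix.submatrix_castLE_mul_of_eq_zero {n m k : ℕ} {R : Type*}
    [NonUnitalNonAssocSemiring R] (U : Matrix (Fin n) (Fin n) R) (H : Matrix (Fin n) (Fin m) R)
    (hkn : k ≤ n) (g : Fin k → Fin m) (hH : ∀ (t : Fin n) b, k ≤ (t : ℕ) → H t (g b) = 0) :
    (U * H).submatrix (Fin.castLE hkn) g =
      U.submatrix (Fin.castLE hkn) (Fin.castLE hkn) * H.submatrix (Fin.castLE hkn) g := by
  ext a b
  refine (Fintype.sum_of_injective _ (Fin.castLE_injective hkn) _ _ (fun t ht => ?_)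
    fun _ => rfl).symm
  exact mul_eq_zero_of_right _ (hH t b (not_lt.1 fun h => ht ⟨⟨t, h⟩, rfl⟩))

open MvPolynomial in
theorem Matrix.eval_det_submatrix_mvPolynomialX {ι κ ρ R : Type*} [Fintype ρ] [DecidableEq ρ]
    [CommRing R] (A : Matrix ι κ R) (f : ρ → ι) (g : ρ → κ) :
    eval (fun p => A p.1 p.2) ((mvPolynomialX ι κ R).submatrix f g).det =
      (A.submatrix f g).det := by
  rw [RingHom.map_det]
  congr 1
  ext a b
  simp [mvPolynomialX]

theorem Matrix.det_submatrix_mvPolynomialX_ne_zero {ι κ ρ R : Type*} [Fintype ρ] [DecidableEq ρ]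
    [CommRing R] [Nontrivial R] {f : ρ → ι} {g : ρ → κ} (hf : f.Injective) (hg : g.Injective) :
    ((mvPolynomialX ι κ R).submatrix f g).det ≠ 0 := by
  classical
  intro h
  set E : Matrix ι κ R := Matrix.of fun i j => if ∃ a, f a = i ∧ g a = j then 1 else 0
  have hE : E.submatrix f g = 1 := by
    ext a b
    simp [E, Matrix.one_apply, hf.eq_iff, hg.eq_iff]
  simpa [h, hE] using eval_det_submatrix_mvPolynomialX E f g

open Finset in
theorem MvPolynomial.card_box_zeros_div_le {N : ℕ} {p : MvPolynomial (Fin N) ℤ} (hp : p ≠ 0)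
    (c : Fin N → ℤ) (B : ℕ) :
    (#{x ∈ Fintype.piFinset fun i => Ico (c i - B) (c i + B) | eval x p = 0} : ℝ) /
      (2 * B : ℝ) ^ N ≤ (∑ i, p.degreeOf i : ℝ) / (2 * B) := by
  have hcard : ∀ i, #(Ico (c i - B) (c i + B)) = 2 * B := fun i => by
    rw [Int.card_Ico]; omega
  have hsz := schwartz_zippel_sum_degreeOf hp fun i => Ico (c i - B) (c i + B)
  simp only [hcard, prod_const, card_univ, Fintype.card_fin, ← sum_div] at hsz
  simpa [NNRat.cast_sum] using (NNRat.cast_le (K := ℝ)).2 hsz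

theorem IsHNF.eq_zero_of_diag_eq_zero {n m : ℕ} {H : Matrix (Fin n) (Fin m) ℤ} (hH : IsHNF H)
    {t₀ : Fin n} {l₀ : Fin m} (hdiag : (t₀ : ℕ) = l₀) (h0 : H t₀ l₀ = 0)
    (t : Fin n) (l : Fin m) (ht : t₀ ≤ t) (hl : l ≤ l₀) : H t l = 0 := by
  obtain ⟨r, hr, j, hj, hrows, hpos, hleft, -⟩ := hH
  by_cases htr : r ≤ (t : ℕ)
  · exact hrows t htr l
  set t' : Fin r := ⟨t, by omega⟩
  have hpivot : (t : ℕ) ≤ j t' := Fin.val_le_val_of_strictMono hj t'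
  by_cases hlj : (l : ℕ) < j t'
  · exact hleft t' l hlj
  -- otherwise `t₀ ≤ t ≤ j t' ≤ l ≤ l₀ = t₀`, so `H t₀ l₀` is the pivot of row `t`
  have ht' : Fin.castLE hr t' = t₀ := Fin.ext (by simp only [Fin.val_castLE, t']; omega)
  have hjt' : j t' = l₀ := Fin.ext (by omega)
  simpa [ht', hjt', h0] using hpos t'

theorem IsHNFOf.det_submatrix_castLE_eq_zero {n m k : ℕ} {A H : Matrix (Fin n) (Fin m) ℤ}
    (hHA : IsHNFOf H A) (hkn : k ≤ n) (hkm : k ≤ m) (i : Fin k) (hi : (i : ℕ) + 1 = k)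
    (h0 : H (Fin.castLE hkn i) (Fin.castLE hkm i) = 0) :
    (A.submatrix (Fin.castLE hkn) (Fin.castLE hkm)).det = 0 := by
  obtain ⟨hH, U, -, rfl⟩ := hHA
  have hzero := hH.eq_zero_of_diag_eq_zero rfl h0
  have hcol : ∀ b : Fin k, Fin.castLE hkm b ≤ Fin.castLE hkm i := fun b => by
    simp only [Fin.le_def, Fin.val_castLE]; omega
  have hrow : ∀ b, H.submatrix (Fin.castLE hkn) (Fin.castLE hkm) i b = 0 := fun b =>
    hzero _ _ le_rfl (hcol b)
  rw [Matrix.submatrix_castLE_mul_of_eq_zero U H hkn _ fun t b ht =>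
      hzero t _ (by simp only [Fin.le_def, Fin.val_castLE]; omega) (hcol b),
    Matrix.det_mul, Matrix.det_eq_zero_of_row_eq_zero i hrow, mul_zero]

theorem matCubeCount_mono {n m : ℕ} {S T : Set (Matrix (Fin n) (Fin m) ℤ)} (hST : S ⊆ T)
    (z : Matrix (Fin n) (Fin m) ℤ) (B : ℕ) : matCubeCount S z B ≤ matCubeCount T z B := by
  classical
  unfold matCubeCount
  exact Finset.card_le_card (Finset.monotone_filter_right _ fun _ _ hA => hST hA)

theorem HasMatDensity.zero_of_subset {n m : ℕ} {S T : Set (Matrix (Fin n) (Fin m) ℤ)}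
    (hT : HasMatDensity T 0) (hST : S ⊆ T) : HasMatDensity S 0 := fun z =>
  tendsto_of_tendsto_of_tendsto_of_le_of_le tendsto_const_nhds (hT z) (fun B => by positivity)
    fun B => by gcongr; exact matCubeCount_mono hST z B

open Finset MvPolynomial in
/-- Matrices are flattened along `finProdFinEquiv`, because Schwartz–Zippel is stated for
polynomials in the variables `Fin N`. -/
theorem matCubeCount_le_card_box_zeros {n m : ℕ} (q : MvPolynomial (Fin n × Fin m) ℤ)
    (z : Matrix (Fin n) (Fin m) ℤ) (B : ℕ) :
    matCubeCount {A | eval (fun p => A p.1 p.2) q = 0} z B ≤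
      #{x ∈ Fintype.piFinset fun t =>
          Ico (z (finProdFinEquiv.symm t).1 (finProdFinEquiv.symm t).2 - B)
            (z (finProdFinEquiv.symm t).1 (finProdFinEquiv.symm t).2 + B) |
        eval x (rename finProdFinEquiv q) = 0} := by
  refine card_le_card_of_injOn
    (fun A t => A (finProdFinEquiv.symm t).1 (finProdFinEquiv.symm t).2) ?_ ?_
  · intro A hA
    simp only [coe_filter, Fintype.mem_piFinset, Set.mem_ofPred_eq, eval_rename] at hA ⊢
    refine ⟨fun t => hA.1 _ _, ?_⟩
    simpa only [Function.comp_def, Equiv.symm_apply_apply, Matrix.of_apply] using hA.2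
  · intro A _ A' _ h
    funext i l
    simpa using congrFun h (finProdFinEquiv (i, l))

open MvPolynomial in
theorem hasMatDensity_setOf_eval_eq_zero {n m : ℕ} {q : MvPolynomial (Fin n × Fin m) ℤ}
    (hq : q ≠ 0) : HasMatDensity {A | eval (fun p => A p.1 p.2) q = 0} 0 := by
  intro z
  set q' := rename finProdFinEquiv q
  have hq' : q' ≠ 0 := (rename_injective _ finProdFinEquiv.injective).ne_iff.2 hq
  have hbound : ∀ B : ℕ, (matCubeCount {A | eval (fun p => A p.1 p.2) q = 0} z B : ℝ) /
      (2 * B : ℝ) ^ (n * m) ≤ (∑ i, q'.degreeOf i : ℝ) / (2 * B) := fun B =>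
    (div_le_div_of_nonneg_right (by exact_mod_cast matCubeCount_le_card_box_zeros q z B)
      (by positivity)).trans (card_box_zeros_div_le hq' _ B)
  have hlim : Tendsto (fun B : ℕ => (∑ i, q'.degreeOf i : ℝ) / (2 * B)) atTop (nhds 0) :=
    tendsto_const_nhds.div_atTop <|
      tendsto_id.const_mul_atTop two_pos |>.comp tendsto_natCast_atTop_atTop
  exact tendsto_of_tendsto_of_tendsto_of_le_of_le tendsto_const_nhds hlim
    (fun B => by positivity) hbound

theorem density_hnf_diag_prefix_zero_general (n m k : ℕ) (hk : 0 < k) (hkn : k ≤ n) (hkm : k ≤ m)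
    (d : Fin k → ℕ) (hdk : d ⟨k - 1, Nat.sub_lt hk Nat.one_pos⟩ = 0) :
    HasMatDensity
      {A : Matrix (Fin n) (Fin m) ℤ | ∃ H, IsHNFOf H A ∧
        ∀ i : Fin k, H (Fin.castLE hkn i) (Fin.castLE hkm i) = (d i : ℤ)}
      0 := by
  refine (hasMatDensity_setOf_eval_eq_zero (Matrix.det_submatrix_mvPolynomialX_ne_zero
    (R := ℤ) (Fin.castLE_injective hkn) (Fin.castLE_injective hkm))).zero_of_subset ?_
  rintro A ⟨H, hHA, hdiag⟩
  rw [Set.mem_ofPred_eq, Matrix.eval_det_submatrix_mvPolynomialX]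
  have hlast := hdiag ⟨k - 1, Nat.sub_lt hk Nat.one_pos⟩
  rw [hdk, Nat.cast_zero] at hlast
  exact hHA.det_submatrix_castLE_eq_zero hkn hkm _ (Nat.sub_add_cancel hk) hlast

/-- If the prescribed diagonal prefix of the HNF ends with a zero, the density
of matrices realizing it is `0`. -/
theorem density_hnf_diag_prefix_zero (n m k : ℕ) (hn : 2 ≤ n) (hk : 0 < k)
    (hcond : if m < n then k ≤ m else k < n) (hkn : k ≤ n) (hkm : k ≤ m)
    (d : Fin k → ℕ) (hdk : d ⟨k - 1, Nat.sub_lt hk Nat.one_pos⟩ = 0) :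
    HasMatDensity
      {A : Matrix (Fin n) (Fin m) ℤ | ∃ H, IsHNFOf H A ∧
        ∀ i : Fin k, H (Fin.castLE hkn i) (Fin.castLE hkm i) = (d i : ℤ)}
      0 :=
  density_hnf_diag_prefix_zero_general n m k hk hkn hkm d hdk
end

section
/- An n×m integer matrix A with n > m is rectangular-unimodular (the gcd of its m×m minors is 1) if and only if all diagonal entries of HNF(A) equal 1. -/
/-! Left multiplication by a unimodular matrix preserves the gcd of the maximal minors, since by
multilinearity of the determinant every minor of `V * C` is an integer combination of minors of `C`.
So the gcd for `A` is the gcd for its HNF `H`. The HNF is upper triangular, hence its only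
possibly nonzero maximal minor is the top square block, whose determinant is the product of the
diagonal entries; these are nonnegative, so their product is a unit iff each of them is `1`. -/

theorem Fin.val_le_val_of_strictMono_s12 {k n : ℕ} {f : Fin k → Fin n} (hf : StrictMono f)
    (x : Fin k) : (x : ℕ) ≤ f x := by
  simpa using Finset.card_le_card_of_injOn f
    (fun y hy => by simpa using hf (by simpa using hy)) hf.injective.injOn
    (s := Finset.Iio x) (t := Finset.Iio (f x))

theorem Fin.eq_castLE_of_strictMono {k n : ℕ} (hk : k ≤ n) {f : Fin k → Fin n}
    (hf : StrictMono f) (hlt : ∀ x, (f x : ℕ) < k) : f = Fin.castLE hk := by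
  let g : Fin k → Fin k := fun x => ⟨f x, hlt x⟩
  have hg : StrictMono g := fun x y hxy => hf hxy
  funext x
  exact Fin.ext (congrArg Fin.val (le_antisymm hg.apply_le hg.le_apply))

namespace Matrix

theorem det_mul_eq_sum_prod_mul_det_submatrix {R ι κ : Type*} [CommRing R] [Fintype ι]
    [DecidableEq ι] [Fintype κ] (P : Matrix ι κ R) (Q : Matrix κ ι R) :
    (P * Q).det = ∑ f : ι → κ, (∏ x, P x (f x)) * (Q.submatrix f id).det := by
  have hrows : (P * Q).det = (detRowAlternating (R := R) (n := ι)).toMultilinearMap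
      (fun x => ∑ k, P x k • Q k) := by
    congr 1
    ext x l
    simp [mul_apply]
  rw [hrows, MultilinearMap.map_sum]
  refine Finset.sum_congr rfl fun f _ => ?_
  rw [MultilinearMap.map_smul_univ]
  rfl

end Matrix

section minorsGcd

variable {n m k : ℕ}

theorem minorsGcd_dvd_det_submatrix (C : Matrix (Fin n) (Fin m) ℤ) (c : Fin k → Fin m)
    (f : Fin k → Fin n) : minorsGcd C c ∣ (C.submatrix f c).det := by
  classical
  by_cases hf : Function.Injective f
  · -- sorting the rows of `f` changes the minor only by a sign
    set σ := Tuple.sort f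
    have hsorted : StrictMono (f ∘ σ) :=
      (Tuple.monotone_sort f).strictMono_of_injective (hf.comp σ.injective)
    have hperm : C.submatrix f c = (C.submatrix (f ∘ σ) c).submatrix σ.symm id := by
      ext x l
      simp
    rw [hperm, Matrix.det_permute]
    exact (Finset.gcd_dvd (Finset.mem_univ (⟨f ∘ σ, hsorted⟩ :
      {ρ : Fin k → Fin n // StrictMono ρ}))).mul_left _
  · obtain ⟨x, y, hxy, hne⟩ := Function.not_injective_iff.mp hf
    rw [Matrix.det_zero_of_row_eq hne (by ext l; simp [hxy])]
    exact dvd_zero _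

theorem minorsGcd_dvd_minorsGcd_mul (V : Matrix (Fin n) (Fin n) ℤ)
    (C : Matrix (Fin n) (Fin m) ℤ) (c : Fin k → Fin m) :
    minorsGcd C c ∣ minorsGcd (V * C) c := by
  classical
  refine Finset.dvd_gcd fun ρ _ => ?_
  rw [Matrix.submatrix_mul V C ρ.1 id c Function.bijective_id,
    Matrix.det_mul_eq_sum_prod_mul_det_submatrix]
  exact Finset.dvd_sum fun f _ => (minorsGcd_dvd_det_submatrix C c f).mul_left _

theorem minorsGcd_mul_of_isUnit_det {V : Matrix (Fin n) (Fin n) ℤ} (hV : IsUnit V.det)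
    (C : Matrix (Fin n) (Fin m) ℤ) (c : Fin k → Fin m) :
    minorsGcd (V * C) c = minorsGcd C c := by
  refine dvd_antisymm_of_normalize_eq Finset.normalize_gcd Finset.normalize_gcd ?_
    (minorsGcd_dvd_minorsGcd_mul V C c)
  conv_rhs => rw [← Matrix.one_mul C, ← Matrix.nonsing_inv_mul V hV, Matrix.mul_assoc]
  exact minorsGcd_dvd_minorsGcd_mul V⁻¹ (V * C) c

theorem minorsGcd_eq_normalize_det_of_rows_eq_zero (hk : k ≤ n) {C : Matrix (Fin n) (Fin m) ℤ}
    (hC : ∀ i : Fin n, k ≤ (i : ℕ) → ∀ l, C i l = 0) (c : Fin k → Fin m) :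
    minorsGcd C c = normalize (C.submatrix (Fin.castLE hk) c).det := by
  classical
  have hminor : ∀ ρ : Fin k → Fin n, StrictMono ρ →
      (C.submatrix (Fin.castLE hk) c).det ∣ (C.submatrix ρ c).det := by
    intro ρ hρ
    by_cases hlt : ∀ x, (ρ x : ℕ) < k
    · rw [Fin.eq_castLE_of_strictMono hk hρ hlt]
    · obtain ⟨x, hx⟩ := not_forall.mp hlt
      have hzero : (C.submatrix ρ c).det = 0 :=
        Matrix.det_eq_zero_of_row_eq_zero x fun l => hC _ (not_lt.mp hx) _
      exact hzero ▸ dvd_zero _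
  refine (dvd_antisymm_of_normalize_eq Finset.normalize_gcd (normalize_idem _) ?_ ?_)
  · exact (Finset.gcd_dvd (Finset.mem_univ (⟨_, Fin.strictMono_castLE hk⟩ :
      {ρ : Fin k → Fin n // StrictMono ρ}))).trans (normalize_associated _).symm.dvd
  · exact (normalize_associated _).dvd.trans (Finset.dvd_gcd fun ρ _ => hminor ρ.1 ρ.2)

end minorsGcd

namespace IsHNFWith

variable {n m r : ℕ} {H : Matrix (Fin n) (Fin m) ℤ} {hr : r ≤ n} {j : Fin r → Fin m}

theorem apply_eq_zero_of_lt (hH : IsHNFWith H r hr j) {i : Fin n} {l : Fin m}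
    (hli : (l : ℕ) < i) : H i l = 0 := by
  obtain ⟨hj, hzero, -, hlow, -⟩ := hH
  by_cases hir : (i : ℕ) < r
  · have hpivot := hlow ⟨i, hir⟩ l (hli.trans_le (Fin.val_le_val_of_strictMono_s12 hj ⟨i, hir⟩))
    rwa [show Fin.castLE hr ⟨i, hir⟩ = i from rfl] at hpivot
  · exact hzero i (not_lt.mp hir) l

theorem diag_nonneg (hH : IsHNFWith H r hr j) (hmn : m ≤ n) (i : Fin m) :
    0 ≤ H (Fin.castLE hmn i) i := by
  obtain ⟨hj, hzero, hpos, hlow, -⟩ := hH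
  by_cases hir : (i : ℕ) < r
  · rcases (Fin.val_le_val_of_strictMono_s12 hj ⟨i, hir⟩).eq_or_lt with hdiag | hbelow
    · have hji : j ⟨i, hir⟩ = i := Fin.ext hdiag.symm
      exact (hji ▸ hpos ⟨i, hir⟩).le
    · exact (hlow ⟨i, hir⟩ i hbelow).ge
  · exact (hzero _ (not_lt.mp hir) i).ge

theorem det_submatrix_castLE (hH : IsHNFWith H r hr j) (hmn : m ≤ n) :
    (H.submatrix (Fin.castLE hmn) id).det = ∏ i, H (Fin.castLE hmn i) i :=
  Matrix.det_of_isUpperTriangular fun _ _ hli => hH.apply_eq_zero_of_lt hli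

end IsHNFWith

/-- For `n > m`, an `n × m` integer matrix is rectangular-unimodular (its `m × m`
minors have gcd `1`) iff all diagonal entries of its HNF equal `1`. -/
theorem rectangular_unimodular_iff_hnf_diag_one (n m : ℕ) (hnm : m < n)
    (A H : Matrix (Fin n) (Fin m) ℤ) (hH : IsHNFOf H A) :
    minorsGcd A (fun l : Fin m => l) = 1 ↔
      ∀ i : Fin m, H (Fin.castLE (le_of_lt hnm) i) i = 1 := by
  obtain ⟨⟨r, hr, j, hHNF⟩, U, hU, rfl⟩ := hH
  have hUdet : IsUnit U.det := by rcases hU with h | h <;> simp [h]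
  have hrows : ∀ i : Fin n, m ≤ (i : ℕ) → ∀ l, H i l = 0 :=
    fun i hi l => hHNF.apply_eq_zero_of_lt (l.isLt.trans_le hi)
  rw [minorsGcd_mul_of_isUnit_det hUdet, minorsGcd_eq_normalize_det_of_rows_eq_zero hnm.le hrows,
    show (fun l : Fin m => l) = id from rfl, hHNF.det_submatrix_castLE, normalize_eq_one,
    IsUnit.prod_univ_iff]
  refine forall_congr' fun i => ?_
  have hdiag := hHNF.diag_nonneg hnm.le i
  rw [Int.isUnit_iff]
  omega
end

section
/- Define D(g) = (d/ζ(2))·f(g) where d = (∏_{j≥2} ζ(j))^{-1} and f is the multiplicative function with f(p) = (2p−1)/(p²(p−1)) for primes p. Then ∑_{g≥1} D(g) = 1 but ∑_{g≥1} g·D(g) = ∞; in particular, since D(p) ≥ C/p² for some constant C > 0 and ∑_{p prime} 1/p diverges, the expectation of g under the distribution D is infinite. -/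
open Filter

/-- The functions `f_n` at prime powers: `f 1 p α = p^{-2α}` and
`f (n+1) p α = ∑_{i=0}^{α} p^{-(n+1) i} f n p (α - i)`. -/
noncomputable def fseq : ℕ → ℕ → ℕ → ℝ
  | 0, _, _ => 0
  | 1, p, α => 1 / (p : ℝ) ^ (2 * α)
  | (n + 2), p, α =>
      ∑ i ∈ Finset.range (α + 1), (1 / (p : ℝ) ^ ((n + 2) * i)) * fseq (n + 1) p (α - i)

/-!
`f_{N+1}` is the value at prime powers of the Dirichlet convolution of `n ↦ n⁻²`, `n⁻²`, `n⁻³`,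
…, `n^{-(N+1)}`, a multiplicative function with total sum `ζ(2) ζ(2) ζ(3) ⋯ ζ(N+1)`. Each factor
is `1` at `n = 1`, so these functions increase with `N`, and they converge pointwise to `f`.
Monotone convergence then gives `∑ f = ζ(2) ∏_{j ≥ 2} ζ(j)`, the product converging because
`ζ(j + 2) - 1 ≤ 2^{-j} (ζ(2) - 1)`. For the expectation, `p D(p) ≥ c / p` on primes and `∑ 1/p`
diverges.
-/

lemma hasSum_zetaR {k : ℕ} (hk : 1 < k) :
    HasSum (fun n : ℕ => 1 / ((n : ℝ) + 1) ^ k) (zetaR k) := by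
  have h : Summable fun n : ℕ => 1 / ((n : ℝ) + 1) ^ k := by
    simpa using (summable_nat_add_iff 1).mpr (Real.summable_one_div_nat_pow.mpr hk)
  simpa [zetaR] using h.hasSum

lemma hasSum_zetaR_sub_one {k : ℕ} (hk : 1 < k) :
    HasSum (fun n : ℕ => 1 / ((n : ℝ) + 2) ^ k) (zetaR k - 1) := by
  simpa [add_assoc, one_add_one_eq_two] using (hasSum_nat_add_iff' 1).mpr (hasSum_zetaR hk)

lemma one_le_zetaR {k : ℕ} (hk : 1 < k) : 1 ≤ zetaR k :=
  sub_nonneg.mp ((hasSum_zetaR_sub_one hk).nonneg fun _ => by positivity)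

lemma zetaR_sub_one_le (k : ℕ) : zetaR (k + 2) - 1 ≤ (1 / 2) ^ k * (zetaR 2 - 1) := by
  refine hasSum_le (fun n => ?_) (hasSum_zetaR_sub_one (by omega))
    ((hasSum_zetaR_sub_one one_lt_two).mul_left _)
  have h2 : (2 : ℝ) ≤ n + 2 := by linarith [n.cast_nonneg (α := ℝ)]
  calc 1 / ((n : ℝ) + 2) ^ (k + 2) = (1 / (n + 2)) ^ k * (1 / (n + 2) ^ 2) := by
        rw [pow_add, one_div_pow, one_div_mul_one_div]
    _ ≤ (1 / 2) ^ k * (1 / (n + 2) ^ 2) := by gcongr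

lemma multipliable_zetaR : Multipliable fun j : ℕ => zetaR (j + 2) := by
  have h : Summable fun j : ℕ => zetaR (j + 2) - 1 :=
    Summable.of_nonneg_of_le (fun j => sub_nonneg.mpr (one_le_zetaR (by omega)))
      zetaR_sub_one_le ((summable_geometric_two).mul_right _)
  simpa using Real.multipliable_one_add_of_summable h

lemma one_le_tprod_zetaR : 1 ≤ ∏' j : ℕ, zetaR (j + 2) :=
  ge_of_tendsto' multipliable_zetaR.hasProd.tendsto_prod_nat fun _ =>
    Finset.one_le_prod fun _ _ => one_le_zetaR (by omega)

namespace ArithmeticFunction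

/-- `n ↦ n⁻ˢ`, written as `ζ / n^s` so that it vanishes at `0` also for `s = 0`. -/
noncomputable def recipPow (s : ℕ) : ArithmeticFunction ℝ := pdiv zeta (pow s)

lemma recipPow_apply {s n : ℕ} (hn : n ≠ 0) : recipPow s n = 1 / (n : ℝ) ^ s := by
  simp [recipPow, hn]

lemma recipPow_apply_one (s : ℕ) : recipPow s 1 = 1 := by
  simp [recipPow_apply]

lemma recipPow_nonneg (s n : ℕ) : 0 ≤ recipPow s n := by
  simp only [recipPow, pdiv_apply, natCoe_apply]
  positivity

lemma isMultiplicative_recipPow (s : ℕ) : (recipPow s).IsMultiplicative :=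
  isMultiplicative_zeta.natCast.pdiv isMultiplicative_pow.natCast

lemma hasSum_recipPow {s : ℕ} (hs : 1 < s) : HasSum (recipPow s) (zetaR s) := by
  rw [← hasSum_nat_add_iff' 1]
  simpa [recipPow_apply] using hasSum_zetaR hs

lemma hasSum_mul {F G : ArithmeticFunction ℝ} {a b : ℝ} (hF : HasSum F a) (hG : HasSum G b) :
    HasSum (F * G) (a * b) := by
  have hFG := summable_mul_of_summable_norm hF.summable.norm hG.summable.norm
  have hfiber (n : ℕ) :
      ∑' x : (fun x : ℕ × ℕ => x.1 * x.2) ⁻¹' {n}, F x.1.1 * G x.1.2 = (F * G) n := by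
    rcases eq_or_ne n 0 with rfl | hn
    · rw [map_zero]
      refine (tsum_congr fun x => ?_).trans tsum_zero
      rcases mul_eq_zero.mp x.2 with h | h <;> simp [h]
    · rw [show (fun x : ℕ × ℕ => x.1 * x.2) ⁻¹' {n} = n.divisorsAntidiagonal by ext; simp [hn],
        Finset.tsum_subtype' n.divisorsAntidiagonal fun x : ℕ × ℕ => F x.1 * G x.2, mul_apply]
  simpa only [hfiber] using (hF.mul hG hFG).tsum_fiberwise fun x : ℕ × ℕ => x.1 * x.2

lemma mul_apply_nonneg {F G : ArithmeticFunction ℝ} (hF : ∀ n, 0 ≤ F n) (hG : ∀ n, 0 ≤ G n)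
    (n : ℕ) : 0 ≤ (F * G) n :=
  (mul_apply (R := ℝ)).symm ▸ Finset.sum_nonneg fun _ _ => mul_nonneg (hF _) (hG _)

lemma apply_le_mul_apply {F G : ArithmeticFunction ℝ} (hF : ∀ n, 0 ≤ F n) (hG : ∀ n, 0 ≤ G n)
    (hF1 : F 1 = 1) (n : ℕ) : G n ≤ (F * G) n := by
  rcases eq_or_ne n 0 with rfl | hn
  · simp only [map_zero, le_refl]
  rw [mul_apply]
  calc G n = F 1 * G n := by rw [hF1, one_mul]
    _ ≤ ∑ x ∈ n.divisorsAntidiagonal, F x.1 * G x.2 :=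
      Finset.single_le_sum (f := fun x : ℕ × ℕ => F x.1 * G x.2)
        (fun _ _ => mul_nonneg (hF _) (hG _)) (a := (1, n))
        (Nat.mem_divisorsAntidiagonal.mpr ⟨one_mul n, hn⟩)

lemma tendsto_apply_of_tendsto_prime_pow {ι R : Type*} [CommSemiring R] [TopologicalSpace R]
    [ContinuousMul R] {l : Filter ι} {F : ι → ArithmeticFunction R}
    (hF : ∀ i, (F i).IsMultiplicative) {f : ℕ → R} (hf1 : f 1 = 1)
    (hmul : ∀ a b : ℕ, a.Coprime b → f (a * b) = f a * f b)
    (hlim : ∀ p α : ℕ, p.Prime → Tendsto (fun i => F i (p ^ α)) l (nhds (f (p ^ α))))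
    {n : ℕ} (hn : n ≠ 0) : Tendsto (fun i => F i n) l (nhds (f n)) := by
  simp only [(hF _).multiplicative_factorization _ hn,
    Nat.multiplicative_factorization f hmul hf1 hn, Finsupp.prod]
  exact tendsto_finsetProd _ fun p hp => hlim p _ (Nat.prime_of_mem_primeFactors hp)

end ArithmeticFunction

open ArithmeticFunction

lemma fseq_succ_zero (n p : ℕ) : fseq (n + 1) p 0 = 1 := by
  induction n with
  | zero => simp [fseq]
  | succ n ih => simpa [fseq] using ih

noncomputable def fApprox : ℕ → ArithmeticFunction ℝ
  | 0 => recipPow 2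
  | N + 1 => recipPow (N + 2) * fApprox N

lemma fApprox_apply_prime_pow {p : ℕ} (hp : p.Prime) (N α : ℕ) :
    fApprox N (p ^ α) = fseq (N + 1) p α := by
  induction N generalizing α with
  | zero => simp [fApprox, fseq, recipPow_apply (pow_ne_zero α hp.ne_zero), ← pow_mul, mul_comm]
  | succ N ih =>
    rw [fApprox, mul_apply,
      Nat.sum_divisorsAntidiagonal (f := fun a b => recipPow (N + 2) a * fApprox N b),
      Nat.sum_divisors_prime_pow hp, fseq]
    refine Finset.sum_congr rfl fun i hi => ?_
    rw [Nat.pow_div (Finset.mem_range_succ_iff.mp hi) hp.pos, ih,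
      recipPow_apply (pow_ne_zero i hp.ne_zero)]
    push_cast
    rw [← pow_mul]
    ring

lemma isMultiplicative_fApprox : ∀ N, (fApprox N).IsMultiplicative
  | 0 => isMultiplicative_recipPow 2
  | N + 1 => (isMultiplicative_recipPow (N + 2)).mul (isMultiplicative_fApprox N)

lemma fApprox_nonneg : ∀ N n, 0 ≤ fApprox N n
  | 0 => recipPow_nonneg 2
  | N + 1 => mul_apply_nonneg (recipPow_nonneg _) (fApprox_nonneg N)

lemma fApprox_monotone (n : ℕ) : Monotone fun N => fApprox N n :=
  monotone_nat_of_le_succ fun N =>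
    apply_le_mul_apply (recipPow_nonneg _) (fApprox_nonneg N) (recipPow_apply_one _) n

lemma hasSum_fApprox : ∀ N,
    HasSum (fApprox N) (zetaR 2 * ∏ j ∈ Finset.range N, zetaR (j + 2))
  | 0 => by simpa [fApprox] using hasSum_recipPow one_lt_two
  | N + 1 => by
    rw [Finset.prod_range_succ, ← mul_assoc, mul_comm]
    exact hasSum_mul (hasSum_recipPow (by omega)) (hasSum_fApprox N)

lemma hasSum_of_monotone_of_tendsto {ι : Type*} {g : ℕ → ι → ℝ} {f : ι → ℝ} {S : ℕ → ℝ}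
    {s : ℝ} (hg : ∀ N i, 0 ≤ g N i) (hmono : ∀ i, Monotone fun N => g N i)
    (hlim : ∀ i, Tendsto (fun N => g N i) atTop (nhds (f i))) (hS : ∀ N, HasSum (g N) (S N))
    (hSlim : Tendsto S atTop (nhds s)) : HasSum f s := by
  have hle (N : ℕ) (i : ι) : g N i ≤ f i := (hmono i).ge_of_tendsto (hlim i) N
  have hfin (t : Finset ι) : ∑ i ∈ t, f i ≤ s :=
    le_of_tendsto_of_tendsto' (tendsto_finsetSum t fun i _ => hlim i) hSlim
      fun N => sum_le_hasSum t (fun i _ => hg N i) (hS N)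
  have hf : Summable f := summable_of_sum_le (fun i => (hg 0 i).trans (hle 0 i)) hfin
  refine hf.hasSum_iff.mpr (le_antisymm (hf.tsum_le_of_sum_le hfin) ?_)
  exact le_of_tendsto' hSlim fun N => hasSum_le (hle N) (hS N) hf.hasSum

lemma hasSum_of_tendsto_fseq {f : ℕ → ℝ} (hf1 : f 1 = 1)
    (hmul : ∀ a b : ℕ, Nat.Coprime a b → f (a * b) = f a * f b)
    (hflim : ∀ p α : ℕ, p.Prime → 1 ≤ α →
      Tendsto (fun n : ℕ => fseq n p α) atTop (nhds (f (p ^ α)))) :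
    HasSum (fun g : ℕ => f (g + 1)) (zetaR 2 * ∏' j : ℕ, zetaR (j + 2)) := by
  have hlim {n : ℕ} (hn : n ≠ 0) : Tendsto (fun N => fApprox N n) atTop (nhds (f n)) := by
    refine tendsto_apply_of_tendsto_prime_pow isMultiplicative_fApprox hf1 hmul
      (fun p α hp => ?_) hn
    simp only [fApprox_apply_prime_pow hp]
    rcases Nat.eq_zero_or_pos α with rfl | hα
    · simp only [pow_zero, hf1, fseq_succ_zero]
      exact tendsto_const_nhds
    · exact (hflim p α hp hα).comp (tendsto_add_atTop_nat 1)
  refine hasSum_of_monotone_of_tendsto (fun N i => fApprox_nonneg N (i + 1))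
    (fun i => fApprox_monotone (i + 1)) (fun i => hlim i.succ_ne_zero) (fun N => ?_)
    (multipliable_zetaR.hasProd.tendsto_prod_nat.const_mul _)
  simpa using (hasSum_nat_add_iff' 1).mpr (hasSum_fApprox N)

lemma not_summable_of_div_prime_le {a : ℕ → ℝ} {c : ℝ} (hc : 0 < c)
    (ha : ∀ p, p.Prime → c / p ≤ a p) : ¬ Summable a := by
  intro hs
  have h : Summable fun p : Nat.Primes => ((p : ℕ) : ℝ) ^ (-1 : ℝ) := by
    refine ((hs.comp_injective Nat.Primes.coe_nat_injective).mul_left c⁻¹).of_nonneg_of_le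
      (fun p => by positivity) fun p => ?_
    rw [Real.rpow_neg_one]
    calc ((p : ℕ) : ℝ)⁻¹ = c⁻¹ * (c / p) := by field_simp
      _ ≤ c⁻¹ * a p := by gcongr; exact ha p p.2
  exact absurd (Nat.Primes.summable_rpow.mp h) (by norm_num)

/-- For the limiting multiplicative function `f` (with `f(p^α) = lim_n f_n(p^α)` and
`f(p) = (2p-1)/(p²(p-1))`), the distribution `D(g) = (d/ζ(2)) f(g)` with
`d = (∏_{j≥2} ζ(j))⁻¹` sums to `1` but has infinite expectation. -/
theorem gcd_distribution_infinite_expectation (f : ℕ → ℝ) (hf1 : f 1 = 1)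
    (hmul : ∀ a b : ℕ, Nat.Coprime a b → f (a * b) = f a * f b)
    (hflim : ∀ p α : ℕ, p.Prime → 1 ≤ α →
      Tendsto (fun n : ℕ => fseq n p α) atTop (nhds (f (p ^ α))))
    (hfp : ∀ p : ℕ, p.Prime →
      f p = (2 * (p : ℝ) - 1) / ((p : ℝ) ^ 2 * ((p : ℝ) - 1))) :
    (∑' g : ℕ, ((∏' j : ℕ, zetaR (j + 2))⁻¹ / zetaR 2) * f (g + 1) = 1) ∧
    ¬ Summable (fun g : ℕ =>
        ((g : ℝ) + 1) * (((∏' j : ℕ, zetaR (j + 2))⁻¹ / zetaR 2) * f (g + 1))) := by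
  have hQ : 0 < ∏' j : ℕ, zetaR (j + 2) := one_pos.trans_le one_le_tprod_zetaR
  have hz : 0 < zetaR 2 := one_pos.trans_le (one_le_zetaR one_lt_two)
  refine ⟨?_, fun hs => ?_⟩
  · rw [tsum_mul_left, (hasSum_of_tendsto_fseq hf1 hmul hflim).tsum_eq]
    field_simp
  · have hC : 0 < (∏' j : ℕ, zetaR (j + 2))⁻¹ / zetaR 2 := by positivity
    set C := (∏' j : ℕ, zetaR (j + 2))⁻¹ / zetaR 2
    refine not_summable_of_div_prime_le (a := fun n => n * (C * f n)) hC (fun p hp => ?_)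
      ((summable_nat_add_iff 1).mp (by simpa using hs))
    have hp2 : (2 : ℝ) ≤ p := by exact_mod_cast hp.two_le
    rw [hfp p hp, show (p : ℝ) * (C * ((2 * p - 1) / (p ^ 2 * (p - 1))))
      = C / p * ((2 * p - 1) / (p - 1)) by field_simp]
    exact le_mul_of_one_le_right (by positivity) ((one_le_div (by linarith)).mpr (by linarith))
end
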